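/- arXiv:0809.1473 — 5 statements merged into one kernel-verified Lean document; each statement's English description precedes it below -/
import Mathlib

section
/- Let d ≥ 1, let S be a finite set of points in ℝ^d, let k be an integer with 1 ≤ k ≤ |S|, and let A be a k-element subset of S. Set p = Σ_{s∈A} s. Then the normal cone of the unordered k-set polytope Q_k(S) at p equals the set of all c ∈ ℝ^d satisfying ⟨c,s⟩ ≥ ⟨c,s'⟩ for every s ∈ A and every s' ∈ S \ A; that is, N_{Q_k(S)}(p) = {c ∈ ℝ^d : ∀ s ∈ A, ∀ s' ∈ S \ A, ⟨c,s⟩ ≥ ⟨c,s'⟩}. -/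
open scoped RealInnerProductSpace Pointwise
open MeasureTheory

attribute [local instance] Classical.decEq

noncomputable section

abbrev E (d : ℕ) := EuclideanSpace ℝ (Fin d)

/-- The unordered k-set polytope `Q_k(S)`: convex hull of the points `∑_{s ∈ A} s`
where `A` ranges over k-element subsets of `S`. -/
def unorderedKSetPolytope (d k : ℕ) (S : Finset (E d)) : Set (E d) :=
  convexHull ℝ {p | ∃ A : Finset (E d), A ⊆ S ∧ A.card = k ∧ p = ∑ s ∈ A, s}

/-- The ordered k-set polytope `P_k(S)`: convex hull of the points
`∑_{i=1}^k (k+1-i) • σ(i)` (here `σ` is 0-indexed, so the weight of `σ i` is `k - i`)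
where `σ` ranges over injective maps from `{1,…,k}` into `S`. -/
def orderedKSetPolytope (d k : ℕ) (S : Finset (E d)) : Set (E d) :=
  convexHull ℝ {p | ∃ σ : Fin k → E d, Function.Injective σ ∧ (∀ i, σ i ∈ S) ∧
    p = ∑ i : Fin k, ((k - (i : ℕ) : ℕ) : ℝ) • σ i}

/-- The normal cone of a set `P` at a point `p`. -/
def normalCone {d : ℕ} (P : Set (E d)) (p : E d) : Set (E d) :=
  {c | ∀ x ∈ P, ⟪c, x⟫ ≤ ⟪c, p⟫}


/-! A linear functional attains its maximum over a convex hull at a generating point, so `c` is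
normal at `∑ A` exactly when `⟪c, ∑ B⟫ ≤ ⟪c, ∑ A⟫` for every `k`-subset `B` of `S`. Exchanging one
`s ∈ A` for one `s' ∈ S \ A` shows that the condition is necessary. It is sufficient because
`∑ B` and `∑ A` share the terms indexed by `A ∩ B`, while `B \ A` and `A \ B` have the same size and
every element of the former lies `c`-below every element of the latter. -/

namespace Finset

variable {ι M : Type*} [AddCommMonoid M]

theorem sum_le_sum_of_card_eq_of_forall_le [PartialOrder M] [IsOrderedAddMonoid M]
    {s t : Finset ι} {f : ι → M} (hst : s.card = t.card) (hle : ∀ i ∈ s, ∀ j ∈ t, f i ≤ f j) :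
    ∑ i ∈ s, f i ≤ ∑ j ∈ t, f j := by
  let e := equivOfCardEq hst
  rw [← sum_coe_sort s, ← sum_coe_sort t, ← e.sum_comp fun j ↦ f j]
  exact sum_le_sum fun i _ ↦ hle i i.2 (e i) (e i).2

theorem sum_le_sum_of_card_eq_of_forall_sdiff_le [PartialOrder M] [IsOrderedAddMonoid M]
    [DecidableEq ι] {s t : Finset ι} {f : ι → M} (hst : s.card = t.card)
    (hle : ∀ i ∈ s \ t, ∀ j ∈ t \ s, f i ≤ f j) :
    ∑ i ∈ s, f i ≤ ∑ j ∈ t, f j := by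
  rw [← sum_inter_add_sum_sdiff s t, ← sum_inter_add_sum_sdiff t s, inter_comm]
  exact add_le_add_right (sum_le_sum_of_card_eq_of_forall_le (card_sdiff_comm hst) hle) _

theorem card_insert_erase [DecidableEq ι] {s : Finset ι} {i j : ι} (hi : i ∈ s) (hj : j ∉ s) :
    (insert j (s.erase i)).card = s.card := by
  rw [card_insert_of_notMem fun h ↦ hj (mem_of_mem_erase h), card_erase_add_one hi]

theorem sum_insert_erase_add [DecidableEq ι] {s : Finset ι} {i j : ι} (hi : i ∈ s) (hj : j ∉ s)
    (f : ι → M) : ∑ x ∈ insert j (s.erase i), f x + f i = ∑ x ∈ s, f x + f j := by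
  rw [sum_insert fun h ↦ hj (mem_of_mem_erase h), add_assoc, sum_erase_add _ _ hi, add_comm]

end Finset

open Finset

theorem normalCone_convexHull {d : ℕ} (V : Set (E d)) (p : E d) :
    normalCone (convexHull ℝ V) p = {c | ∀ x ∈ V, ⟪c, x⟫ ≤ ⟪c, p⟫} := by
  ext c
  exact ⟨fun hc x hx ↦ hc x (subset_convexHull ℝ V hx), fun hc ↦
    (convex_halfSpace_le (innerₛₗ ℝ c).isLinear _).convexHull_subset_iff.2 hc⟩

theorem normalCone_unorderedKSetPolytope_general
    (d : ℕ) (S : Finset (E d)) (k : ℕ)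
    (A : Finset (E d)) (hAS : A ⊆ S) (hA : A.card = k) :
    normalCone (unorderedKSetPolytope d k S) (∑ s ∈ A, s) =
      {c : E d | ∀ s ∈ A, ∀ s' ∈ S \ A, ⟪c, s'⟫ ≤ ⟪c, s⟫} := by
  ext c
  simp only [unorderedKSetPolytope, normalCone_convexHull, Set.mem_ofPred_eq,
    forall_exists_index, and_imp]
  constructor
  · intro hc s hs s' hs'
    obtain ⟨hs'S, hs'A⟩ := mem_sdiff.1 hs'
    have hswap := hc _ (insert s' (A.erase s))
      (insert_subset hs'S ((erase_subset s A).trans hAS)) ((card_insert_erase hs hs'A).trans hA) rfl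
    have hsum := sum_insert_erase_add hs hs'A (⟪c, ·⟫)
    rw [inner_sum, inner_sum] at hswap
    linarith
  · rintro hc _ B hBS hB rfl
    rw [inner_sum, inner_sum]
    refine sum_le_sum_of_card_eq_of_forall_sdiff_le (hB.trans hA.symm) fun t ht s hs ↦ ?_
    exact hc s (mem_sdiff.1 hs).1 t (mem_sdiff.2 ⟨hBS (mem_sdiff.1 ht).1, (mem_sdiff.1 ht).2⟩)

/-- The normal cone of the unordered k-set polytope at `∑_{s ∈ A} s` is the set of
vectors `c` with `⟨c,s⟩ ≥ ⟨c,s'⟩` for all `s ∈ A`, `s' ∈ S \ A`. -/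
theorem normalCone_unorderedKSetPolytope
    (d : ℕ) (hd : 1 ≤ d) (S : Finset (E d)) (k : ℕ) (hk1 : 1 ≤ k) (hk2 : k ≤ S.card)
    (A : Finset (E d)) (hAS : A ⊆ S) (hA : A.card = k) :
    normalCone (unorderedKSetPolytope d k S) (∑ s ∈ A, s) =
      {c : E d | ∀ s ∈ A, ∀ s' ∈ S \ A, ⟪c, s'⟫ ≤ ⟪c, s⟫} :=
  normalCone_unorderedKSetPolytope_general d S k A hAS hA

end
end

section
/- Let d ≥ 1, let S be a finite set of points in ℝ^d, let k be an integer with 1 ≤ k ≤ |S|, let A be a k-element subset of S, and let c ∈ ℝ^d. Then ⟨c,s⟩ > ⟨c,s'⟩ for every s ∈ A and every s' ∈ S \ A if and only if p = Σ_{s∈A} s is the unique maximizer of the linear functional x ↦ ⟨c,x⟩ over the unordered k-set polytope Q_k(S), i.e. ⟨c,p⟩ > ⟨c,x⟩ for every x ∈ Q_k(S) with x ≠ p. -/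
/-!
If every point of `A` beats every point of `S \ A` under `⟪c, ·⟫`, any other `k`-subset `B`
trades the points of `A \ B` for equally many worse points of `B \ A`, so `∑ A` strictly beats
every other generator of `Q_k(S)`. The open half-space `{x | ⟪c, x⟫ < ⟪c, ∑ A⟫}` together with
the point `∑ A` is convex, hence contains the whole polytope. Conversely, swapping one `s ∈ A` for
one `s' ∈ S \ A` yields a generator of value `⟪c, ∑ A⟫ - ⟪c, s⟫ + ⟪c, s'⟫`.
-/

open scoped RealInnerProductSpace Pointwise
open MeasureTheory

attribute [local instance] Classical.decEq

noncomputable section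

section Convexity

variable {𝕜 V : Type*} [Field 𝕜] [LinearOrder 𝕜] [IsStrictOrderedRing 𝕜]
  [AddCommGroup V] [Module 𝕜 V]

theorem LinearMap.convex_insert_setOf_lt (f : V →ₗ[𝕜] 𝕜) (p : V) :
    Convex 𝕜 (insert p {x | f x < f p}) := by
  refine convex_iff_forall_pos.2 fun x hx y hy a b ha hb hab => ?_
  by_cases hxy : x = p ∧ y = p
  · obtain ⟨rfl, rfl⟩ := hxy
    exact Or.inl (Convex.combo_self hab _)
  have hxle : f x ≤ f p := by rcases hx with rfl | hx; exacts [le_rfl, le_of_lt hx]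
  have hyle : f y ≤ f p := by rcases hy with rfl | hy; exacts [le_rfl, le_of_lt hy]
  have hlt : a * f x + b * f y < a * f p + b * f p := by
    rcases not_and_or.1 hxy with hxp | hyp
    · have : f x < f p := hx.resolve_left hxp
      exact add_lt_add_of_lt_of_le (mul_lt_mul_of_pos_left this ha)
        (mul_le_mul_of_nonneg_left hyle hb.le)
    · have : f y < f p := hy.resolve_left hyp
      exact add_lt_add_of_le_of_lt (mul_le_mul_of_nonneg_left hxle ha.le)
        (mul_lt_mul_of_pos_left this hb)
  right
  calc f (a • x + b • y) = a * f x + b * f y := by simp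
    _ < a * f p + b * f p := hlt
    _ = f p := by rw [← add_mul, hab, one_mul]

theorem LinearMap.apply_lt_of_mem_convexHull (f : V →ₗ[𝕜] 𝕜) {G : Set V} {p x : V}
    (hG : ∀ q ∈ G, q ≠ p → f q < f p) (hx : x ∈ convexHull 𝕜 G) (hxp : x ≠ p) :
    f x < f p := by
  have hsub : G ⊆ insert p {x | f x < f p} := fun q hq =>
    (eq_or_ne q p).imp_right (hG q hq)
  exact (convexHull_min hsub (f.convex_insert_setOf_lt p) hx).resolve_left hxp

end Convexity

theorem Finset.sum_lt_sum_of_card_eq {ι M : Type*} [DecidableEq ι] [AddCommMonoid M]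
    [LinearOrder M] [IsOrderedCancelAddMonoid M] {A B : Finset ι} (g : ι → M)
    (hcard : B.card = A.card) (hBA : B ≠ A) (hlt : ∀ a ∈ A \ B, ∀ b ∈ B \ A, g b < g a) :
    ∑ b ∈ B, g b < ∑ a ∈ A, g a := by
  have hcard' : (B \ A).card = (A \ B).card := Finset.card_sdiff_comm hcard
  have hBA_ne : (B \ A).Nonempty := Finset.sdiff_nonempty.2 fun hsub =>
    hBA (Finset.eq_of_subset_of_card_le hsub hcard.ge)
  have hAB_ne : (A \ B).Nonempty := by
    rw [← Finset.card_pos, ← hcard']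
    exact hBA_ne.card_pos
  obtain ⟨a₀, ha₀, hmin⟩ := (A \ B).exists_min_image g hAB_ne
  have hsdiff : ∑ b ∈ B \ A, g b < ∑ a ∈ A \ B, g a :=
    calc ∑ b ∈ B \ A, g b < ∑ _b ∈ B \ A, g a₀ :=
          Finset.sum_lt_sum_of_nonempty hBA_ne fun b hb => hlt a₀ ha₀ b hb
      _ = (A \ B).card • g a₀ := by rw [Finset.sum_const, hcard']
      _ ≤ ∑ a ∈ A \ B, g a := Finset.card_nsmul_le_sum _ _ _ hmin
  rw [← Finset.sum_inter_add_sum_sdiff B A, ← Finset.sum_inter_add_sum_sdiff A B,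
    Finset.inter_comm]
  exact add_lt_add_right hsdiff _

theorem sum_mem_unorderedKSetPolytope {d k : ℕ} {S B : Finset (E d)} (hBS : B ⊆ S)
    (hB : B.card = k) : ∑ s ∈ B, s ∈ unorderedKSetPolytope d k S :=
  subset_convexHull ℝ _ ⟨B, hBS, hB, rfl⟩

theorem strict_separation_iff_unique_max_unordered_general
    (d : ℕ) (S : Finset (E d)) (k : ℕ)
    (A : Finset (E d)) (hAS : A ⊆ S) (hA : A.card = k) (c : E d) :
    (∀ s ∈ A, ∀ s' ∈ S \ A, ⟪c, s'⟫ < ⟪c, s⟫) ↔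
      (∀ x ∈ unorderedKSetPolytope d k S, x ≠ ∑ s ∈ A, s → ⟪c, x⟫ < ⟪c, ∑ s ∈ A, s⟫) := by
  constructor
  · intro h x hx hxA
    refine (innerₛₗ ℝ c).apply_lt_of_mem_convexHull ?_ hx hxA
    rintro _ ⟨B, hBS, hB, rfl⟩ hne
    simp only [innerₛₗ_apply_apply, inner_sum]
    refine Finset.sum_lt_sum_of_card_eq _ (hB.trans hA.symm) (by rintro rfl; exact hne rfl) ?_
    intro a ha b hb
    exact h a (Finset.sdiff_subset ha) b (Finset.sdiff_subset_sdiff hBS le_rfl hb)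
  · intro h s hs s' hs'
    obtain ⟨hs'S, hs'A⟩ := Finset.mem_sdiff.1 hs'
    have hs'_erase : s' ∉ A.erase s := fun hmem => hs'A (Finset.mem_of_mem_erase hmem)
    have hswap : ∑ x ∈ insert s' (A.erase s), x = ∑ x ∈ A, x - s + s' := by
      rw [Finset.sum_insert hs'_erase, Finset.sum_erase_eq_sub hs, add_comm]
    have hmem := sum_mem_unorderedKSetPolytope (k := k)
      (Finset.insert_subset hs'S ((A.erase_subset s).trans hAS))
      (by rw [Finset.card_insert_of_notMem hs'_erase, Finset.card_erase_of_mem hs,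
        ← hA, Nat.sub_add_cancel (Finset.card_pos.2 ⟨s, hs⟩)])
    have hne : ∑ x ∈ A, x - s + s' ≠ ∑ x ∈ A, x := by
      rw [Ne, sub_add_eq_add_sub, sub_eq_iff_eq_add, add_right_inj]
      exact fun hss => hs'A (hss ▸ hs)
    have := h _ hmem (hswap ▸ hne)
    rw [hswap, inner_add_right, inner_sub_right] at this
    linarith

/-- `⟨c,s⟩ > ⟨c,s'⟩` for all `s ∈ A`, `s' ∈ S \ A` iff `∑_{s ∈ A} s` is the unique
maximizer of `x ↦ ⟨c,x⟩` over the unordered k-set polytope. -/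
theorem strict_separation_iff_unique_max_unordered
    (d : ℕ) (hd : 1 ≤ d) (S : Finset (E d)) (k : ℕ) (hk1 : 1 ≤ k) (hk2 : k ≤ S.card)
    (A : Finset (E d)) (hAS : A ⊆ S) (hA : A.card = k) (c : E d) :
    (∀ s ∈ A, ∀ s' ∈ S \ A, ⟪c, s'⟫ < ⟪c, s⟫) ↔
      (∀ x ∈ unorderedKSetPolytope d k S, x ≠ ∑ s ∈ A, s → ⟪c, x⟫ < ⟪c, ∑ s ∈ A, s⟫) :=
  strict_separation_iff_unique_max_unordered_general d S k A hAS hA c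

end
end

section
/- Let d ≥ 1, let S be a finite set of points in ℝ^d, let k be an integer with 1 ≤ k ≤ |S|, let σ : {1,…,k} → S be injective, and let c ∈ ℝ^d. Then ⟨c,σ(1)⟩ > ⟨c,σ(2)⟩ > … > ⟨c,σ(k)⟩ together with ⟨c,σ(k)⟩ > ⟨c,s⟩ for all s ∈ S outside the image of σ holds if and only if p = Σ_{i=1}^k (k+1−i)·σ(i) is the unique maximizer of x ↦ ⟨c,x⟩ over the ordered k-set polytope P_k(S), i.e. ⟨c,p⟩ > ⟨c,x⟩ for every x ∈ P_k(S) with x ≠ p. -/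
/-!
Write `p(τ) = ∑ (k - i) • τ i` for the vertex of an injective `τ : Fin k → S`. Summation by parts
gives `⟪c, p(τ)⟫ = ∑ⱼ ∑_{i ≤ j} ⟪c, τ i⟫`. If `c` ranks `σ` strictly above everything else, the
first `j + 1` values of `σ` are the `j + 1` best points of `S`, so each prefix sum of any other `τ`
is at most that of `σ`, strictly at the first `j` where the prefix sets differ. Hence `p(σ)` is the
strict maximum among the vertices, and so the unique maximizer on their convex hull. Conversely,
swapping `σ i` and `σ j` (`i < j`) moves `p(σ)` by `(j - i) • (σ j - σ i)`, and replacing the last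
entry `σ (k - 1)` by an unused `s ∈ S` moves it by `s - σ (k - 1)`; both land on vertices other
than `p(σ)`, so uniqueness of the maximum forces the strict ranking.
-/


open scoped RealInnerProductSpace Pointwise
open MeasureTheory

attribute [local instance] Classical.decEq

noncomputable section

open Finset Function

theorem ConvexOn.convex_insert_setOf_lt {𝕜 V : Type*} [Field 𝕜] [LinearOrder 𝕜]
    [IsStrictOrderedRing 𝕜] [AddCommGroup V] [Module 𝕜 V] {f : V → 𝕜}
    (hf : ConvexOn 𝕜 Set.univ f) (p : V) : Convex 𝕜 (insert p {x | f x < f p}) := by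
  have hle : ∀ {u}, u ∈ insert p {x | f x < f p} → f u ≤ f p := by
    rintro u (rfl | hu)
    exacts [le_rfl, hu.le]
  rw [convex_iff_openSegment_subset]
  rintro x hx y hy z ⟨a, b, ha, hb, hab, rfl⟩
  by_cases hxy : x = p ∧ y = p
  · obtain ⟨rfl, rfl⟩ := hxy
    exact Or.inl (Convex.combo_self hab _)
  have hlt : a * f x + b * f y < a * f p + b * f p := by
    rcases not_and_or.mp hxy with hx' | hy'
    · exact add_lt_add_of_lt_of_le (mul_lt_mul_of_pos_left (hx.resolve_left hx') ha)
        (mul_le_mul_of_nonneg_left (hle hy) hb.le)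
    · exact add_lt_add_of_le_of_lt (mul_le_mul_of_nonneg_left (hle hx) ha.le)
        (mul_lt_mul_of_pos_left (hy.resolve_left hy') hb)
  refine Or.inr ?_
  calc f (a • x + b • y) ≤ a * f x + b * f y := hf.2 trivial trivial ha.le hb.le hab
    _ < a * f p + b * f p := hlt
    _ = f p := by rw [← add_mul, hab, one_mul]

theorem ConvexOn.lt_of_mem_convexHull_of_ne {𝕜 V : Type*} [Field 𝕜] [LinearOrder 𝕜]
    [IsStrictOrderedRing 𝕜] [AddCommGroup V] [Module 𝕜 V] {f : V → 𝕜}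
    (hf : ConvexOn 𝕜 Set.univ f) {G : Set V} {p x : V} (hG : ∀ g ∈ G, g ≠ p → f g < f p)
    (hx : x ∈ convexHull 𝕜 G) (hxp : x ≠ p) : f x < f p :=
  (convexHull_min (fun g hg => (eq_or_ne g p).imp id (hG g hg)) (hf.convex_insert_setOf_lt p)
    hx).resolve_left hxp

section SumSdiff

variable {α M : Type*} [DecidableEq α] [AddCommMonoid M] [LinearOrder M]
  [IsOrderedCancelAddMonoid M] {A T : Finset α} {v : α → M}

theorem Finset.sum_lt_sum_of_card_eq_of_lt_on_sdiff (hcard : #A = #T)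
    (hsep : ∀ a ∈ A \ T, ∀ t ∈ T \ A, v a < v t) (hne : A ≠ T) :
    ∑ a ∈ A, v a < ∑ t ∈ T, v t := by
  have hAT : (A \ T).Nonempty :=
    sdiff_nonempty.2 fun h => hne (eq_of_subset_of_card_le h hcard.ge)
  have hTA : (T \ A).Nonempty :=
    sdiff_nonempty.2 fun h => hne (eq_of_subset_of_card_le h hcard.le).symm
  obtain ⟨m, hm, hmin⟩ := exists_min_image (T \ A) v hTA
  rw [← sum_sdiff_lt_sum_sdiff]
  calc ∑ a ∈ A \ T, v a < ∑ _a ∈ A \ T, v m :=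
        sum_lt_sum_of_nonempty hAT fun a ha => hsep a ha m hm
    _ = ∑ _t ∈ T \ A, v m := by rw [sum_const, sum_const, card_sdiff_comm hcard]
    _ ≤ ∑ t ∈ T \ A, v t := sum_le_sum hmin

theorem Finset.sum_le_sum_of_card_eq_of_lt_on_sdiff (hcard : #A = #T)
    (hsep : ∀ a ∈ A \ T, ∀ t ∈ T \ A, v a < v t) : ∑ a ∈ A, v a ≤ ∑ t ∈ T, v t := by
  obtain rfl | hne := eq_or_ne A T
  · exact le_rfl
  · exact (sum_lt_sum_of_card_eq_of_lt_on_sdiff hcard hsep hne).le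

end SumSdiff

theorem eq_of_forall_image_Iic_eq {ι α : Type*} [LinearOrder ι] [LocallyFiniteOrderBot ι]
    [DecidableEq α] {σ τ : ι → α} (hτ : Injective τ)
    (h : ∀ j, (Iic j).image τ = (Iic j).image σ) : τ = σ := by
  funext j
  obtain ⟨i, hij, hi⟩ := mem_image.1 (h j ▸ mem_image_of_mem τ (mem_Iic.2 le_rfl))
  obtain rfl | hlt := (mem_Iic.1 hij).eq_or_lt
  · exact hi.symm
  obtain ⟨l, hli, hl⟩ := mem_image.1 ((h i).symm ▸ mem_image_of_mem σ (mem_Iic.2 le_rfl))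
  exact absurd (hτ (hl.trans hi)) ((mem_Iic.1 hli).trans_lt hlt).ne

theorem Function.Injective.update_of_notMem_range {ι α : Type*} [DecidableEq ι] {f : ι → α}
    (hf : Injective f) (a : ι) {b : α} (hb : b ∉ Set.range f) : Injective (update f a b) := by
  intro x y hxy
  simp only [update_apply] at hxy
  split_ifs at hxy with hx hy hy
  · rw [hx, hy]
  · exact absurd ⟨y, hxy.symm⟩ hb
  · exact absurd ⟨x, hxy⟩ hb
  · exact hf hxy

section OrderedSum

variable {V : Type*} {k : ℕ}

def orderedSum [AddCommMonoid V] [Module ℝ V] (σ : Fin k → V) : V :=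
  ∑ i : Fin k, ((k - (i : ℕ) : ℕ) : ℝ) • σ i

theorem map_orderedSum [AddCommMonoid V] [Module ℝ V] {W : Type*} [AddCommMonoid W]
    [Module ℝ W] (f : V →ₗ[ℝ] W) (σ : Fin k → V) : f (orderedSum σ) = orderedSum (f ∘ σ) := by
  simp [orderedSum, map_sum]

theorem orderedSum_eq_sum_sum_Iic [AddCommMonoid V] [Module ℝ V] (σ : Fin k → V) :
    orderedSum σ = ∑ j, ∑ i ∈ Iic j, σ i := by
  rw [sum_comm' (t' := univ) (s' := Ici) (by simp)]
  simp only [orderedSum, sum_const, Fin.card_Ici, Nat.cast_smul_eq_nsmul]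

theorem orderedSum_comp_swap_sub [AddCommGroup V] [Module ℝ V] (σ : Fin k → V) (i j : Fin k) :
    orderedSum (σ ∘ Equiv.swap i j) - orderedSum σ = ((j : ℝ) - i) • (σ j - σ i) := by
  obtain rfl | hij := eq_or_ne i j
  · simp
  have hreindex : orderedSum (σ ∘ Equiv.swap i j) =
      ∑ l, ((k - (Equiv.swap i j l : ℕ) : ℕ) : ℝ) • σ l := by
    rw [orderedSum, ← Equiv.sum_comp (Equiv.swap i j)]
    simp
  rw [hreindex, orderedSum, ← sum_sub_distrib, Fintype.sum_eq_add i j hij fun l hl => by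
    simp [Equiv.swap_apply_of_ne_of_ne hl.1 hl.2]]
  simp only [Equiv.swap_apply_left, Equiv.swap_apply_right, Nat.cast_sub i.isLt.le,
    Nat.cast_sub j.isLt.le]
  module

theorem orderedSum_update_sub [AddCommGroup V] [Module ℝ V] (σ : Fin k → V) (m : Fin k)
    (s : V) : orderedSum (update σ m s) - orderedSum σ = ((k - (m : ℕ) : ℕ) : ℝ) • (s - σ m) := by
  rw [orderedSum, orderedSum, ← sum_sub_distrib, Fintype.sum_eq_single m fun l hl => by
    simp [update_of_ne hl], update_self, smul_sub]

end OrderedSum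

section Rearrangement

variable {α : Type*} [DecidableEq α] {k : ℕ} {S : Finset α} {v : α → ℝ} {σ τ : Fin k → α}

theorem apply_lt_of_notMem_image_Iic (hv : StrictAnti (v ∘ σ))
    (hout : ∀ s ∈ S, s ∉ Set.range σ → ∀ i, v s < v (σ i)) {a : α} (ha : a ∈ S) {j : Fin k}
    (haj : a ∉ (Iic j).image σ) {i : Fin k} (hi : i ≤ j) : v a < v (σ i) := by
  by_cases har : a ∈ Set.range σ
  · obtain ⟨l, rfl⟩ := har
    have hjl : j < l := not_le.1 fun hlj => haj (mem_image_of_mem σ (mem_Iic.2 hlj))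
    exact hv (hi.trans_lt hjl)
  · exact hout a ha har i

theorem lt_on_sdiff_image_Iic (hv : StrictAnti (v ∘ σ))
    (hout : ∀ s ∈ S, s ∉ Set.range σ → ∀ i, v s < v (σ i)) (hτS : ∀ i, τ i ∈ S) (j : Fin k) :
    ∀ a ∈ (Iic j).image τ \ (Iic j).image σ, ∀ t ∈ (Iic j).image σ \ (Iic j).image τ,
      v a < v t := by
  intro a ha t ht
  obtain ⟨haτ, haσ⟩ := mem_sdiff.1 ha
  obtain ⟨l, -, rfl⟩ := mem_image.1 haτ
  obtain ⟨i, hi, rfl⟩ := mem_image.1 (mem_sdiff.1 ht).1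
  exact apply_lt_of_notMem_image_Iic hv hout (hτS l) haσ (mem_Iic.1 hi)

theorem orderedSum_comp_lt_of_strictAnti (hv : StrictAnti (v ∘ σ))
    (hout : ∀ s ∈ S, s ∉ Set.range σ → ∀ i, v s < v (σ i)) (hτ : Injective τ)
    (hτS : ∀ i, τ i ∈ S) (hne : τ ≠ σ) : orderedSum (v ∘ τ) < orderedSum (v ∘ σ) := by
  have hσ : Injective σ := hv.injective.of_comp
  obtain ⟨j₀, hj₀⟩ : ∃ j, (Iic j).image τ ≠ (Iic j).image σ := by
    by_contra! h
    exact hne (eq_of_forall_image_Iic_eq hτ h)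
  have hsum : ∀ {ρ : Fin k → α}, Injective ρ → ∀ j,
      ∑ i ∈ Iic j, (v ∘ ρ) i = ∑ x ∈ (Iic j).image ρ, v x :=
    fun hρ _ => (sum_image fun _ _ _ _ h => hρ h).symm
  have hcard : ∀ j, #((Iic j).image τ) = #((Iic j).image σ) := by
    simp [card_image_of_injective _ hτ, card_image_of_injective _ hσ]
  simp only [orderedSum_eq_sum_sum_Iic, hsum hτ, hsum hσ]
  exact sum_lt_sum
    (fun j _ => sum_le_sum_of_card_eq_of_lt_on_sdiff (hcard j)
      (lt_on_sdiff_image_Iic hv hout hτS j))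
    ⟨j₀, mem_univ _, sum_lt_sum_of_card_eq_of_lt_on_sdiff (hcard j₀)
      (lt_on_sdiff_image_Iic hv hout hτS j₀) hj₀⟩

end Rearrangement

section Polytope

variable {d k : ℕ} {S : Finset (E d)} {σ : Fin k → E d} {c : E d}

theorem orderedSum_mem_orderedKSetPolytope {τ : Fin k → E d} (hτ : Injective τ)
    (hτS : ∀ i, τ i ∈ S) : orderedSum τ ∈ orderedKSetPolytope d k S :=
  subset_convexHull ℝ _ ⟨τ, hτ, hτS, rfl⟩

theorem inner_lt_inner_orderedSum_of_strictAnti (hanti : StrictAnti fun i => ⟪c, σ i⟫)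
    (hout : ∀ s ∈ S, s ∉ Set.range σ → ∀ i, ⟪c, s⟫ < ⟪c, σ i⟫) {x : E d}
    (hx : x ∈ orderedKSetPolytope d k S) (hxσ : x ≠ orderedSum σ) :
    ⟪c, x⟫ < ⟪c, orderedSum σ⟫ := by
  refine ((innerₛₗ ℝ c).convexOn convex_univ).lt_of_mem_convexHull_of_ne ?_ hx hxσ
  rintro _ ⟨τ, hτ, hτS, rfl⟩ hτσ
  change ⟪c, orderedSum τ⟫ < ⟪c, orderedSum σ⟫
  rw [← innerₛₗ_apply_apply, ← innerₛₗ_apply_apply, map_orderedSum, map_orderedSum]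
  exact orderedSum_comp_lt_of_strictAnti hanti hout hτ hτS (by rintro rfl; exact hτσ rfl)

end Polytope

theorem inner_neg_of_sub_eq_smul {F : Type*} [NormedAddCommGroup F] [InnerProductSpace ℝ F]
    {P : Set F} {c p g u : F} {a : ℝ} (hmax : ∀ x ∈ P, x ≠ p → ⟪c, x⟫ < ⟪c, p⟫) (hg : g ∈ P)
    (ha : 0 < a) (hu : u ≠ 0) (hgp : g - p = a • u) : ⟪c, u⟫ < 0 := by
  have hgp' : g ≠ p := fun h => smul_ne_zero ha.ne' hu (by rw [← hgp, h, sub_self])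
  have : a * ⟪c, u⟫ < 0 := by
    rw [← real_inner_smul_right, ← hgp, inner_sub_right, sub_neg]
    exact hmax g hg hgp'
  exact neg_of_mul_neg_right this ha.le

/-- `⟨c,σ(1)⟩ > … > ⟨c,σ(k)⟩ > ⟨c,s⟩` for all `s ∈ S` outside the image of `σ` iff
`∑_i (k+1-i) • σ(i)` is the unique maximizer of `x ↦ ⟨c,x⟩` over the ordered
k-set polytope. -/
theorem strict_ranking_iff_unique_max_ordered
    (d : ℕ) (S : Finset (E d)) (k : ℕ) (hk1 : 1 ≤ k)
    (σ : Fin k → E d) (hσinj : Function.Injective σ) (hσS : ∀ i, σ i ∈ S) (c : E d) :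
    ((∀ i j : Fin k, i < j → ⟪c, σ j⟫ < ⟪c, σ i⟫) ∧
        ∀ s ∈ S, s ∉ Set.range σ → ⟪c, s⟫ < ⟪c, σ ⟨k - 1, by omega⟩⟫) ↔
      (∀ x ∈ orderedKSetPolytope d k S,
        x ≠ ∑ i : Fin k, ((k - (i : ℕ) : ℕ) : ℝ) • σ i →
          ⟪c, x⟫ < ⟪c, ∑ i : Fin k, ((k - (i : ℕ) : ℕ) : ℝ) • σ i⟫) := by
  set m : Fin k := ⟨k - 1, by omega⟩
  have hm : (m : ℕ) = k - 1 := rfl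
  show (StrictAnti (fun i => ⟪c, σ i⟫) ∧ ∀ s ∈ S, s ∉ Set.range σ → ⟪c, s⟫ < ⟪c, σ m⟫) ↔
    ∀ x ∈ orderedKSetPolytope d k S, x ≠ orderedSum σ → ⟪c, x⟫ < ⟪c, orderedSum σ⟫
  constructor
  · rintro ⟨hanti, hlast⟩ x hx hxσ
    refine inner_lt_inner_orderedSum_of_strictAnti hanti (fun s hs hsσ i => ?_) hx hxσ
    exact (hlast s hs hsσ).trans_le (hanti.antitone (Fin.mk_le_mk.2 (by omega) : i ≤ m))
  · intro hmax
    refine ⟨fun i j hij => ?_, fun s hs hsσ => ?_⟩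
    · have := inner_neg_of_sub_eq_smul hmax
        (orderedSum_mem_orderedKSetPolytope (hσinj.comp (Equiv.swap i j).injective) fun _ => hσS _)
        (sub_pos.2 (Nat.cast_lt.2 hij)) (sub_ne_zero.2 (hσinj.ne hij.ne'))
        (orderedSum_comp_swap_sub σ i j)
      rwa [inner_sub_right, sub_neg] at this
    · have := inner_neg_of_sub_eq_smul hmax
        (orderedSum_mem_orderedKSetPolytope (hσinj.update_of_notMem_range m hsσ)
          ((forall_update_iff σ fun _ x => x ∈ S).2 ⟨hs, fun i _ => hσS i⟩))
        one_pos (sub_ne_zero.2 fun h => hsσ ⟨m, h.symm⟩)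
        (by rw [orderedSum_update_sub, hm, Nat.sub_sub_self hk1, Nat.cast_one])
      rwa [inner_sub_right, sub_neg] at this
end
end

section
/- Let d ≥ 1, let S be a finite set of points in ℝ^d, and let k be an integer with 1 ≤ k ≤ |S|. Suppose A and B are k-element subsets of S such that there exists c ∈ ℝ^d with ⟨c,s⟩ > ⟨c,s'⟩ for every s ∈ A and every s' ∈ S \ A (i.e. A is strictly linearly separable from its complement in S). If B ≠ A, then Σ_{s∈A} s ≠ Σ_{s∈B} s. In particular, the map A ↦ Σ_{s∈A} s is injective on the collection of strictly separable k-element subsets of S. -/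
open scoped RealInnerProductSpace Pointwise
open MeasureTheory

attribute [local instance] Classical.decEq

noncomputable section

/-!
A separating direction `c` makes `A` the unique maximiser of `B ↦ ∑ s ∈ B, ⟪c, s⟫` among the
subsets of `S` of its size: comparing `B` with `A` comes down to comparing `B \ A` with `A \ B`,
two sets of equal size, and every point of the first lies strictly below every point of the
second in the direction `c`. Equal vector sums would give equal values of this linear functional.
-/

namespace Finset

variable {ι M : Type*} [AddCommMonoid M] [LinearOrder M] [IsOrderedCancelAddMonoid M]
  {f : ι → M}

theorem sum_lt_sum_of_card_eq_of_forall_lt {s t : Finset ι} (hs : s.Nonempty) (hst : #s = #t)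
    (hf : ∀ i ∈ s, ∀ j ∈ t, f i < f j) : ∑ i ∈ s, f i < ∑ j ∈ t, f j := by
  obtain ⟨m, hm, hmax⟩ := s.exists_max_image f hs
  have ht : t.Nonempty := card_pos.1 (hst ▸ hs.card_pos)
  calc ∑ i ∈ s, f i ≤ #s • f m := sum_le_card_nsmul s f (f m) hmax
    _ = ∑ _j ∈ t, f m := by rw [sum_const, hst]
    _ < ∑ j ∈ t, f j := sum_lt_sum_of_nonempty ht fun j hj ↦ hf m hm j hj

theorem sum_lt_sum_of_card_eq_of_forall_sdiff_lt [DecidableEq ι] {S A B : Finset ι}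
    (hBS : B ⊆ S) (hcard : #B = #A) (hne : B ≠ A) (hf : ∀ a ∈ A, ∀ s ∈ S \ A, f s < f a) :
    ∑ b ∈ B, f b < ∑ a ∈ A, f a := by
  rw [← sum_sdiff_lt_sum_sdiff]
  refine sum_lt_sum_of_card_eq_of_forall_lt ?_ (card_sdiff_comm hcard) fun b hb a ha ↦ ?_
  · exact sdiff_nonempty.2 fun hBA ↦ hne (eq_of_subset_of_card_le hBA hcard.ge)
  · exact hf a (mem_sdiff.1 ha).1 b (sdiff_subset_sdiff hBS le_rfl hb)

end Finset

theorem sum_injective_on_separable_subsets_general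
    (d : ℕ) (S : Finset (E d)) (k : ℕ)
    (A B : Finset (E d)) (hA : A.card = k) (hBS : B ⊆ S) (hB : B.card = k)
    (hsep : ∃ c : E d, ∀ s ∈ A, ∀ s' ∈ S \ A, ⟪c, s'⟫ < ⟪c, s⟫)
    (hne : B ≠ A) :
    (∑ s ∈ A, s) ≠ ∑ s ∈ B, s := by
  obtain ⟨c, hc⟩ := hsep
  intro hsum
  have hlt : ∑ s ∈ B, ⟪c, s⟫ < ∑ s ∈ A, ⟪c, s⟫ :=
    Finset.sum_lt_sum_of_card_eq_of_forall_sdiff_lt hBS (hB.trans hA.symm) hne hc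
  rw [← inner_sum, ← inner_sum, hsum] at hlt
  exact hlt.false

/-- If `A` is a strictly linearly separable k-element subset of `S` and `B` is any other
k-element subset of `S`, then `∑_{s ∈ A} s ≠ ∑_{s ∈ B} s`; i.e. the map `A ↦ ∑_{s ∈ A} s`
is injective on strictly separable k-element subsets. -/
theorem sum_injective_on_separable_subsets
    (d : ℕ) (hd : 1 ≤ d) (S : Finset (E d)) (k : ℕ) (hk1 : 1 ≤ k) (hk2 : k ≤ S.card)
    (A B : Finset (E d)) (hAS : A ⊆ S) (hA : A.card = k) (hBS : B ⊆ S) (hB : B.card = k)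
    (hsep : ∃ c : E d, ∀ s ∈ A, ∀ s' ∈ S \ A, ⟪c, s'⟫ < ⟪c, s⟫)
    (hne : B ≠ A) :
    (∑ s ∈ A, s) ≠ ∑ s ∈ B, s :=
  sum_injective_on_separable_subsets_general d S k A B hA hBS hB hsep hne

end
end

section
/- Let d ≥ 1, let S be a finite set of N ≥ 1 points in ℝ^d, and let k be an integer with 1 ≤ k < N. Then the affine span of the unordered k-set polytope Q_k(S) has the same dimension as the affine span of S; in particular dim Q_k(S) = dim conv(S). -/
/-!
The affine span of a convex hull is the affine span of the set itself, so it suffices to compare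
the vector spans of `S` and of its `k`-subset sums. Since two `k`-subset sums have equally many
terms, their difference is unchanged when a fixed point `o ∈ S` is subtracted from every term,
so it is a combination of the vectors `s - o`, `s ∈ S`. Conversely, for `s ≠ t` in `S`,
completing both `{s}` and `{t}` by the same `k - 1` further points of `S` (possible since
`k < |S|`) gives two `k`-subset sums whose difference is `s - t`.
-/
open scoped RealInnerProductSpace Pointwise
open MeasureTheory

attribute [local instance] Classical.decEq

noncomputable section

section SubsetSums

variable {R V : Type*} [Ring R] [AddCommGroup V] [Module R V]

def subsetSums (S : Finset V) (k : ℕ) : Set V :=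
  {p | ∃ A : Finset V, A ⊆ S ∧ A.card = k ∧ p = ∑ s ∈ A, s}

theorem sum_sub_sum_mem_vectorSpan {S A B : Finset V} (hA : A ⊆ S) (hB : B ⊆ S)
    (hAB : A.card = B.card) :
    ∑ a ∈ A, a - ∑ b ∈ B, b ∈ vectorSpan R (S : Set V) := by
  obtain rfl | ⟨o, ho⟩ := A.eq_empty_or_nonempty
  · simp [Finset.card_eq_zero.mp hAB.symm]
  have hshift (C : Finset V) (hC : C ⊆ S) :
      ∑ c ∈ C, (c -ᵥ o) ∈ vectorSpan R (S : Set V) :=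
    Submodule.sum_mem _ fun c hc => vsub_mem_vectorSpan R (hC hc) (hA ho)
  have hdiff : ∑ a ∈ A, a - ∑ b ∈ B, b = ∑ a ∈ A, (a -ᵥ o) - ∑ b ∈ B, (b -ᵥ o) := by
    simp only [vsub_eq_sub, Finset.sum_sub_distrib, Finset.sum_const, hAB]
    abel
  rw [hdiff]
  exact Submodule.sub_mem _ (hshift A hA) (hshift B hB)

theorem sub_mem_vectorSpan_subsetSums {S : Finset V} {k : ℕ} (hk1 : 1 ≤ k) (hk2 : k < S.card)
    {s t : V} (hs : s ∈ S) (ht : t ∈ S) :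
    s - t ∈ vectorSpan R (subsetSums S k) := by
  obtain rfl | hst := eq_or_ne s t
  · simp
  obtain ⟨C, hC, hCcard⟩ : ∃ C ⊆ (S.erase t).erase s, C.card = k - 1 := by
    apply Finset.exists_subset_card_eq
    rw [Finset.card_erase_of_mem (Finset.mem_erase.mpr ⟨hst, hs⟩), Finset.card_erase_of_mem ht]
    omega
  have hsC : s ∉ C := fun h => (Finset.mem_erase.mp (hC h)).1 rfl
  have htC : t ∉ C := fun h => (Finset.mem_erase.mp (Finset.mem_of_mem_erase (hC h))).1 rfl
  have hCS : C ⊆ S := hC.trans ((Finset.erase_subset _ _).trans (Finset.erase_subset _ _))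
  have hmem {u : V} (hu : u ∈ S) (huC : u ∉ C) : ∑ x ∈ insert u C, x ∈ subsetSums S k :=
    ⟨insert u C, Finset.insert_subset hu hCS,
      by rw [Finset.card_insert_of_notMem huC, hCcard]; omega, rfl⟩
  have hdiff : ∑ x ∈ insert s C, x - ∑ x ∈ insert t C, x = s - t := by
    rw [Finset.sum_insert hsC, Finset.sum_insert htC]
    abel
  rw [← hdiff, ← vsub_eq_sub]
  exact vsub_mem_vectorSpan R (hmem hs hsC) (hmem ht htC)

theorem vectorSpan_subsetSums {S : Finset V} {k : ℕ} (hk1 : 1 ≤ k) (hk2 : k < S.card) :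
    vectorSpan R (subsetSums S k) = vectorSpan R (S : Set V) := by
  apply le_antisymm <;> rw [vectorSpan_def, Submodule.span_le]
  · rintro _ ⟨_, ⟨A, hA, hAk, rfl⟩, _, ⟨B, hB, hBk, rfl⟩, rfl⟩
    exact sum_sub_sum_mem_vectorSpan hA hB (hAk.trans hBk.symm)
  · rintro _ ⟨s, hs, t, ht, rfl⟩
    exact sub_mem_vectorSpan_subsetSums hk1 hk2 hs ht

end SubsetSums

theorem dim_unorderedKSetPolytope_general
    (d : ℕ) (S : Finset (E d))
    (k : ℕ) (hk1 : 1 ≤ k) (hk2 : k < S.card) :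
    Module.finrank ℝ (affineSpan ℝ (unorderedKSetPolytope d k S)).direction =
      Module.finrank ℝ (affineSpan ℝ (convexHull ℝ (S : Set (E d)))).direction := by
  have hQ : unorderedKSetPolytope d k S = convexHull ℝ (subsetSums S k) := rfl
  rw [hQ, affineSpan_convexHull, affineSpan_convexHull, direction_affineSpan,
    direction_affineSpan, vectorSpan_subsetSums hk1 hk2]

/-- For `1 ≤ k < |S|`, the unordered k-set polytope has the same dimension (dimension of
affine span) as `conv(S)`. -/
theorem dim_unorderedKSetPolytope
    (d : ℕ) (hd : 1 ≤ d) (S : Finset (E d)) (hS : 1 ≤ S.card)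
    (k : ℕ) (hk1 : 1 ≤ k) (hk2 : k < S.card) :
    Module.finrank ℝ (affineSpan ℝ (unorderedKSetPolytope d k S)).direction =
      Module.finrank ℝ (affineSpan ℝ (convexHull ℝ (S : Set (E d)))).direction :=
  dim_unorderedKSetPolytope_general d S k hk1 hk2
end
end
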